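/- For every positive integer n there exists a wireless network in ℝ² consisting of 4n+1 pairwise-distinct stations, with background noise N = 1, threshold β = 1 and path-loss exponent 2, in which all stations except one distinguished station s₀ have power 1, such that the reception zone of s₀ has at least n connected components. In particular, a reception zone of a network with m stations can have Ω(m) connected components. -/

import Mathlib

open Finset

/-- SINR of station `i` at point `p`, for stations `s` in the plane, powers `P`,
noise `N` and path-loss exponent 2. -/
noncomputable def sinr2 {d n : ℕ} (s : Fin n → EuclideanSpace ℝ (Fin d))
    (P : Fin n → ℝ) (N : ℝ) (i : Fin n) (p : EuclideanSpace ℝ (Fin d)) : ℝ :=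
  (P i / dist p (s i) ^ 2) /
    ((∑ j ∈ Finset.univ.erase i, P j / dist p (s j) ^ 2) + N)

/-- The reception zone of station `i`. -/
noncomputable def recZone2 {d n : ℕ} (s : Fin n → EuclideanSpace ℝ (Fin d))
    (P : Fin n → ℝ) (N β : ℝ) (i : Fin n) : Set (EuclideanSpace ℝ (Fin d)) :=
  {p | p ∉ Set.range s ∧ β ≤ sinr2 s P N i p} ∪ {s i}

/-- The set of connected components (cells) of a set `S`. -/
def componentsOf {X : Type*} [TopologicalSpace X] (S : Set X) : Set (Set X) :=
  {C | ∃ t ∈ S, C = connectedComponentIn S t}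

set_option maxHeartbeats 1000000



namespace WCnet

abbrev E2 := EuclideanSpace ℝ (Fin 2)

noncomputable def pt (x y : ℝ) : E2 := WithLp.toLp 2 ![x, y]

lemma pt0 (x y : ℝ) : pt x y 0 = x := rfl
lemma pt1 (x y : ℝ) : pt x y 1 = y := rfl

lemma dist_sq (p q : E2) :
    dist p q ^ 2 = (p 0 - q 0) ^ 2 + (p 1 - q 1) ^ 2 := by
  rw [EuclideanSpace.dist_eq, Real.sq_sqrt (by positivity)]
  simp [Fin.sum_univ_two, Real.dist_eq, sq_abs]

lemma le_of_sq {a b : ℝ} (hb : 0 ≤ b) (h : a ^ 2 ≤ b ^ 2) (ha : 0 ≤ a) : a ≤ b := by nlinarith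

lemma eq_of_sq {a b : ℝ} (ha : 0 ≤ a) (hb : 0 ≤ b) (h : a ^ 2 = b ^ 2) : a = b := by nlinarith

lemma dist_le_l1 (p q : E2) : dist p q ≤ |p 0 - q 0| + |p 1 - q 1| := by
  refine le_of_sq (by positivity) ?_ dist_nonneg
  rw [dist_sq]
  nlinarith [abs_nonneg (p 0 - q 0), abs_nonneg (p 1 - q 1), sq_abs (p 0 - q 0),
    sq_abs (p 1 - q 1), mul_nonneg (abs_nonneg (p 0 - q 0)) (abs_nonneg (p 1 - q 1))]

noncomputable def tv (n k : ℕ) : ℝ := (k : ℝ) / n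
noncomputable def Rv (n : ℕ) : ℝ := 40 * (n : ℝ) ^ 2
noncomputable def cx (n k : ℕ) : ℝ := Rv n * (1 - tv n k ^ 2) / (1 + tv n k ^ 2)
noncomputable def cy (n k : ℕ) : ℝ := Rv n * (2 * tv n k) / (1 + tv n k ^ 2)
noncomputable def cc (n k : ℕ) : E2 := pt (cx n k) (cy n k)
noncomputable def vx (e : ℕ) : ℝ := if e = 0 then 1 else if e = 1 then -1 else 0
noncomputable def vy (e : ℕ) : ℝ := if e = 2 then 1 else if e = 3 then -1 else 0
noncomputable def st (n k e : ℕ) : E2 := pt (cx n k + vx e / 10) (cy n k + vy e / 10)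

noncomputable def ss (n : ℕ) : Fin (4 * n + 1) → E2 := fun j =>
  if j.val = 0 then pt 0 0 else st n ((j.val - 1) / 4) ((j.val - 1) % 4)

noncomputable def PP (n : ℕ) : Fin (4 * n + 1) → ℝ := fun j =>
  if j = 0 then 402 * Rv n ^ 2 else 1

lemma hn1 {n : ℕ} (hn : 0 < n) : (1 : ℝ) ≤ (n : ℝ) := by exact_mod_cast hn

lemma hR40 {n : ℕ} (hn : 0 < n) : 40 ≤ Rv n := by
  have := hn1 hn; unfold Rv; nlinarith

lemma norm_cc (n k : ℕ) (hn : 0 < n) : cx n k ^ 2 + cy n k ^ 2 = Rv n ^ 2 := by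
  have h : 0 < 1 + tv n k ^ 2 := by positivity
  unfold cx cy
  field_simp
  ring

lemma chord_sq {n k k' : ℕ} (hn : 0 < n) (hk : k < n) (hk' : k' < n) (hne : k ≠ k') :
    (40 * (n : ℝ)) ^ 2 ≤ (cx n k - cx n k') ^ 2 + (cy n k - cy n k') ^ 2 := by
  have hnr : (0 : ℝ) < n := by exact_mod_cast hn
  have hd : (0 : ℝ) < 1 + tv n k ^ 2 := by positivity
  have hd' : (0 : ℝ) < 1 + tv n k' ^ 2 := by positivity
  have key : (cx n k - cx n k') ^ 2 + (cy n k - cy n k') ^ 2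
      = 4 * Rv n ^ 2 * (tv n k - tv n k') ^ 2 / ((1 + tv n k ^ 2) * (1 + tv n k' ^ 2)) := by
    unfold cx cy
    field_simp
    ring
  have ht0 : 0 ≤ tv n k := by unfold tv; positivity
  have ht0' : 0 ≤ tv n k' := by unfold tv; positivity
  have ht1 : tv n k ≤ 1 := by
    unfold tv; rw [div_le_one hnr]; exact_mod_cast hk.le
  have ht1' : tv n k' ≤ 1 := by
    unfold tv; rw [div_le_one hnr]; exact_mod_cast hk'.le
  have hsep : 1 ≤ (n : ℝ) ^ 2 * (tv n k - tv n k') ^ 2 := by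
    have h1 : (1 : ℝ) ≤ ((k : ℝ) - (k' : ℝ)) ^ 2 := by
      rcases Nat.lt_or_ge k k' with h | h
      · have : (k : ℝ) + 1 ≤ (k' : ℝ) := by exact_mod_cast h
        nlinarith
      · have hlt : k' < k := lt_of_le_of_ne h (Ne.symm hne)
        have : (k' : ℝ) + 1 ≤ (k : ℝ) := by exact_mod_cast hlt
        nlinarith
    have h2 : (n : ℝ) ^ 2 * (tv n k - tv n k') ^ 2 = ((k : ℝ) - (k' : ℝ)) ^ 2 := by
      unfold tv; field_simp
    rw [h2]; exact h1
  rw [key, le_div_iff₀ (by positivity)]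
  have hA : tv n k ^ 2 ≤ 1 := by nlinarith
  have hB : tv n k' ^ 2 ≤ 1 := by nlinarith
  have hab : tv n k ^ 2 * tv n k' ^ 2 ≤ 1 := by nlinarith
  have hprod : (1 + tv n k ^ 2) * (1 + tv n k' ^ 2) ≤ 4 := by nlinarith
  have hRv : Rv n = 40 * (n : ℝ) ^ 2 := rfl
  have e1 : (40 * (n:ℝ)) ^ 2 * ((1 + tv n k ^ 2) * (1 + tv n k' ^ 2)) ≤ 6400 * (n:ℝ)^2 := by
    nlinarith [mul_le_mul_of_nonneg_left hprod (by positivity : (0:ℝ) ≤ 1600 * (n:ℝ)^2)]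
  have e2 : 6400 * (n:ℝ)^2 ≤ 4 * Rv n ^ 2 * (tv n k - tv n k') ^ 2 := by
    rw [hRv]
    nlinarith [mul_nonneg (by positivity : (0:ℝ) ≤ 6400 * (n:ℝ)^2)
      (by linarith : (0:ℝ) ≤ (n:ℝ)^2 * (tv n k - tv n k')^2 - 1)]
  linarith

lemma dist_cc_origin (n k : ℕ) (hn : 0 < n) : dist (cc n k) (pt 0 0) = Rv n := by
  refine eq_of_sq dist_nonneg (by nlinarith [hR40 hn]) ?_
  rw [dist_sq]
  simpa [cc, pt0, pt1] using norm_cc n k hn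

lemma dist_cc_st_sq (n k : ℕ) {e : ℕ} (he : e < 4) :
    dist (cc n k) (st n k e) ^ 2 = 1 / 100 := by
  rw [dist_sq]
  simp only [cc, st, pt0, pt1]
  interval_cases e <;> norm_num [vx, vy]

lemma dist_cc_st (n k : ℕ) {e : ℕ} (he : e < 4) :
    dist (cc n k) (st n k e) = 1 / 10 := by
  refine eq_of_sq dist_nonneg (by norm_num) ?_
  rw [dist_cc_st_sq n k he]; norm_num

lemma dist_cc_cc {n k k' : ℕ} (hn : 0 < n) (hk : k < n) (hk' : k' < n) (hne : k ≠ k') :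
    40 * (n : ℝ) ≤ dist (cc n k) (cc n k') := by
  have hnr : (0 : ℝ) < n := by exact_mod_cast hn
  refine le_of_sq dist_nonneg ?_ (by positivity)
  rw [dist_sq]
  simpa [cc, pt0, pt1] using chord_sq hn hk hk' hne

lemma cc_st_far {n k k' e' : ℕ} (hn : 0 < n) (hk : k < n) (hk' : k' < n) (he' : e' < 4)
    (hne : k ≠ k') : 40 * (n : ℝ) - 1 / 10 ≤ dist (cc n k) (st n k' e') := by
  have h1 := dist_cc_cc hn hk hk' hne
  have h2 := dist_cc_st n k' he'
  have h3 := dist_triangle (cc n k) (st n k' e') (cc n k')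
  have h4 : dist (st n k' e') (cc n k') = 1 / 10 := by rw [dist_comm]; exact h2
  linarith

lemma core_ab (a b : ℝ) (ha : 0 < a) (hb : 0 < b) (hab : a + b = 1/10) :
    440 ≤ 1/(2*b^2) + 1/((a+1/10)^2+b^2) + 1/(2*a^2) + 1/(a^2+(b+1/10)^2) := by
  have h1 : (400:ℝ) ≤ 1/(2*a^2) + 1/(2*b^2) := by
    have e1 : 1/(2*a^2) + 1/(2*b^2) = (2*a^2+2*b^2)/((2*a^2)*(2*b^2)) := by
      field_simp; ring
    rw [e1, le_div_iff₀ (by positivity)]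
    have hq : a*b ≤ 1/400 := by nlinarith [sq_nonneg (a-b)]
    nlinarith [sq_nonneg (a-b), mul_pos ha hb, mul_nonneg (mul_pos ha hb).le
      (by linarith : (0:ℝ) ≤ 1/400 - a*b)]
  have h2 : (20:ℝ) ≤ 1/((a+1/10)^2+b^2) := by
    have hd : (a+1/10)^2+b^2 ≤ 1/20 := by nlinarith
    calc (20:ℝ) = 1/(1/20) := by norm_num
      _ ≤ 1/((a+1/10)^2+b^2) := one_div_le_one_div_of_le (by positivity) hd
  have h3 : (20:ℝ) ≤ 1/(a^2+(b+1/10)^2) := by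
    have hd : a^2+(b+1/10)^2 ≤ 1/20 := by nlinarith
    calc (20:ℝ) = 1/(1/20) := by norm_num
      _ ≤ 1/(a^2+(b+1/10)^2) := one_div_le_one_div_of_le (by positivity) hd
  linarith

lemma core_bar (x y : ℝ) (hx : x ≠ 0) (hy : y ≠ 0) (hxy : |x| + |y| = 1/10) :
    440 ≤ 1/((x-1/10)^2+y^2) + 1/((x+1/10)^2+y^2) + 1/(x^2+(y-1/10)^2) + 1/(x^2+(y+1/10)^2) := by
  rcases abs_cases x with ⟨hx1, hx2⟩ | ⟨hx1, hx2⟩ <;>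
    rcases abs_cases y with ⟨hy1, hy2⟩ | ⟨hy1, hy2⟩ <;>
    rw [hx1, hy1] at hxy
  · -- x ≥ 0, y ≥ 0
    have ha : 0 < x := lt_of_le_of_ne hx2 (Ne.symm hx)
    have hb : 0 < y := lt_of_le_of_ne hy2 (Ne.symm hy)
    have e1 : (x-1/10)^2+y^2 = 2*y^2 := by
      have h : x - 1/10 = -y := by linarith
      rw [h]; ring
    have e3 : x^2+(y-1/10)^2 = 2*x^2 := by
      have h : y - 1/10 = -x := by linarith
      rw [h]; ring
    rw [e1, e3]
    linarith [core_ab x y ha hb hxy]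
  · -- x ≥ 0, y ≤ 0
    have ha : 0 < x := lt_of_le_of_ne hx2 (Ne.symm hx)
    have hb : 0 < -y := by rcases lt_or_gt_of_ne hy with h|h; linarith; linarith [hy2]
    have e1 : (x-1/10)^2+y^2 = 2*(-y)^2 := by
      have h : x - 1/10 = y := by linarith
      rw [h]; ring
    have e2 : (x+1/10)^2+y^2 = (x+1/10)^2+(-y)^2 := by ring
    have e3 : x^2+(y-1/10)^2 = x^2+((-y)+1/10)^2 := by ring
    have e4 : x^2+(y+1/10)^2 = 2*x^2 := by
      have h : y + 1/10 = x := by linarith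
      rw [h]; ring
    rw [e1, e2, e3, e4]
    linarith [core_ab x (-y) ha hb (by linarith)]
  · -- x ≤ 0, y ≥ 0
    have ha : 0 < -x := by rcases lt_or_gt_of_ne hx with h|h; linarith; linarith [hx2]
    have hb : 0 < y := lt_of_le_of_ne hy2 (Ne.symm hy)
    have e1 : (x-1/10)^2+y^2 = ((-x)+1/10)^2+y^2 := by ring
    have e2 : (x+1/10)^2+y^2 = 2*y^2 := by
      have h : x + 1/10 = y := by linarith
      rw [h]; ring
    have e3 : x^2+(y-1/10)^2 = 2*(-x)^2 := by
      have h : y - 1/10 = x := by linarith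
      rw [h]; ring
    have e4 : x^2+(y+1/10)^2 = (-x)^2+(y+1/10)^2 := by ring
    rw [e1, e2, e3, e4]
    linarith [core_ab (-x) y ha hb (by linarith)]
  · -- x ≤ 0, y ≤ 0
    have ha : 0 < -x := by rcases lt_or_gt_of_ne hx with h|h; linarith; linarith [hx2]
    have hb : 0 < -y := by rcases lt_or_gt_of_ne hy with h|h; linarith; linarith [hy2]
    have e1 : (x-1/10)^2+y^2 = ((-x)+1/10)^2+(-y)^2 := by ring
    have e2 : (x+1/10)^2+y^2 = 2*(-y)^2 := by
      have h : x + 1/10 = -y := by linarith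
      rw [h]; ring
    have e3 : x^2+(y-1/10)^2 = (-x)^2+((-y)+1/10)^2 := by ring
    have e4 : x^2+(y+1/10)^2 = 2*(-x)^2 := by
      have h : y + 1/10 = -x := by linarith
      rw [h]; ring
    rw [e1, e2, e3, e4]
    linarith [core_ab (-x) (-y) ha hb (by linarith)]

def oi (n k e : ℕ) : Fin (4*n+1) := ⟨(1+4*k+e) % (4*n+1), Nat.mod_lt _ (by omega)⟩

lemma oi_val {n k e : ℕ} (hk : k < n) (he : e < 4) : (oi n k e).val = 1+4*k+e :=
  Nat.mod_eq_of_lt (by omega)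

lemma ss_oi {n k e : ℕ} (hk : k < n) (he : e < 4) : ss n (oi n k e) = st n k e := by
  have hv : (oi n k e).val = 1+4*k+e := oi_val hk he
  have hne0 : ¬((oi n k e).val = 0) := by rw [hv]; omega
  have h2 : ((oi n k e).val - 1)/4 = k := by rw [hv]; omega
  have h3 : ((oi n k e).val - 1)%4 = e := by rw [hv]; omega
  show (if (oi n k e).val = 0 then pt 0 0 else
    st n (((oi n k e).val - 1)/4) (((oi n k e).val - 1) % 4)) = st n k e
  rw [if_neg hne0, h2, h3]

lemma ss_zero (n : ℕ) : ss n 0 = pt 0 0 := by simp [ss]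

lemma vxy_inj {e e' : ℕ} (he : e < 4) (he' : e' < 4) (hx : vx e = vx e')
    (hy : vy e = vy e') : e = e' := by
  interval_cases e <;> interval_cases e' <;> revert hx hy <;> norm_num [vx, vy]

lemma ss_inj (n : ℕ) (hn : 0 < n) : Function.Injective (ss n) := by
  have hnr := hn1 hn
  intro j j' hEq
  by_contra hne
  have hvne : j.val ≠ j'.val := fun h => hne (Fin.ext h)
  have hd : dist (ss n j) (ss n j') = 0 := by rw [hEq, dist_self]
  have hstd : ∀ j₀ : Fin (4*n+1), j₀.val ≠ 0 →
      ss n j₀ = st n ((j₀.val-1)/4) ((j₀.val-1)%4) := fun j₀ h => if_neg h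
  rcases Nat.eq_zero_or_pos j.val with hj0 | hjp
  · rcases Nat.eq_zero_or_pos j'.val with hj0' | hjp'
    · exact hvne (by omega)
    · have hssj : ss n j = pt 0 0 := by simp [ss, hj0]
      have hssj' := hstd j' (by omega)
      set k' := (j'.val-1)/4 with hk'def
      set e' := (j'.val-1)%4 with he'def
      have hk' : k' < n := by have := j'.isLt; omega
      have he' : e' < 4 := by omega
      rw [hssj, hssj'] at hd
      have h1 := dist_cc_origin n k' hn
      have h2 := dist_cc_st n k' he'
      have h3 := dist_triangle (cc n k') (st n k' e') (pt 0 0)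
      have h4 : dist (st n k' e') (pt 0 0) = 0 := by rw [dist_comm] at hd; exact hd
      have := hR40 (n := n) hn
      linarith
  rcases Nat.eq_zero_or_pos j'.val with hj0' | hjp'
  · have hssj' : ss n j' = pt 0 0 := by simp [ss, hj0']
    have hssj := hstd j (by omega)
    set k := (j.val-1)/4 with hkdef
    set e := (j.val-1)%4 with hedef
    have hk : k < n := by have := j.isLt; omega
    have he : e < 4 := by omega
    rw [hssj, hssj'] at hd
    have h1 := dist_cc_origin n k hn
    have h2 := dist_cc_st n k he
    have h3 := dist_triangle (cc n k) (st n k e) (pt 0 0)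
    have h4 : dist (st n k e) (pt 0 0) = 0 := hd
    have := hR40 (n := n) hn
    linarith
  · have hssj := hstd j (by omega)
    have hssj' := hstd j' (by omega)
    set k := (j.val-1)/4 with hkdef
    set e := (j.val-1)%4 with hedef
    set k' := (j'.val-1)/4 with hk'def
    set e' := (j'.val-1)%4 with he'def
    have hk : k < n := by have := j.isLt; omega
    have he : e < 4 := by omega
    have hk' : k' < n := by have := j'.isLt; omega
    have he' : e' < 4 := by omega
    rw [hssj, hssj'] at hd
    by_cases hkk : k = k'
    · have hee : e ≠ e' := by omega
      rw [← hkk] at hd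
      have hst : st n k e = st n k e' := dist_eq_zero.mp hd
      have hx : (st n k e) 0 = (st n k e') 0 := by rw [hst]
      have hy : (st n k e) 1 = (st n k e') 1 := by rw [hst]
      simp only [st, pt0, pt1] at hx hy
      have hvx : vx e = vx e' := by linarith
      have hvy : vy e = vy e' := by linarith
      exact hee (vxy_inj he he' hvx hvy)
    · have h1 := dist_cc_cc hn hk hk' hkk
      have h2 := dist_cc_st n k he
      have h3 := dist_cc_st n k' he'
      have h4 := dist_triangle (cc n k) (st n k e) (cc n k')
      have h5 := dist_triangle (st n k e) (st n k' e') (cc n k')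
      have h6 : dist (st n k' e') (cc n k') = 1/10 := by rw [dist_comm]; exact h3
      linarith

noncomputable def own (n k : ℕ) : Finset (Fin (4*n+1)) := {oi n k 0, oi n k 1, oi n k 2, oi n k 3}

lemma oi_ne {n k : ℕ} (hk : k < n) {e e' : ℕ} (he : e < 4) (he' : e' < 4) (h : e ≠ e') :
    oi n k e ≠ oi n k e' := by
  rw [Ne, Fin.ext_iff, oi_val hk he, oi_val hk he']
  omega

lemma own_sub (n k : ℕ) (hk : k < n) : own n k ⊆ Finset.univ.erase 0 := by
  intro j hj
  simp only [own, Finset.mem_insert, Finset.mem_singleton] at hj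
  rw [Finset.mem_erase]
  refine ⟨?_, Finset.mem_univ _⟩
  rcases hj with rfl | rfl | rfl | rfl <;>
    · rw [Ne, Fin.ext_iff, oi_val hk (by norm_num)]
      simp

lemma sum_own (n k : ℕ) (hk : k < n) (f : Fin (4*n+1) → ℝ) :
    ∑ j ∈ own n k, f j = f (oi n k 0) + f (oi n k 1) + f (oi n k 2) + f (oi n k 3) := by
  have d01 := oi_ne hk (by norm_num) (by norm_num) (by norm_num : (0:ℕ) ≠ 1)
  have d02 := oi_ne hk (by norm_num) (by norm_num) (by norm_num : (0:ℕ) ≠ 2)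
  have d03 := oi_ne hk (by norm_num) (by norm_num) (by norm_num : (0:ℕ) ≠ 3)
  have d12 := oi_ne hk (by norm_num) (by norm_num) (by norm_num : (1:ℕ) ≠ 2)
  have d13 := oi_ne hk (by norm_num) (by norm_num) (by norm_num : (1:ℕ) ≠ 3)
  have d23 := oi_ne hk (by norm_num) (by norm_num) (by norm_num : (2:ℕ) ≠ 3)
  show ∑ j ∈ ({oi n k 0, oi n k 1, oi n k 2, oi n k 3} : Finset (Fin (4*n+1))), f j = _
  rw [Finset.sum_insert (by simp [Finset.mem_insert, Finset.mem_singleton, d01, d02, d03]),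
      Finset.sum_insert (by simp [Finset.mem_insert, Finset.mem_singleton, d12, d13]),
      Finset.sum_insert (by simp [Finset.mem_singleton, d23]),
      Finset.sum_singleton]
  ring

lemma PP_oi (n k : ℕ) (hk : k < n) {e : ℕ} (he : e < 4) : PP n (oi n k e) = 1 := by
  have : (oi n k e) ≠ 0 := by
    rw [Ne, Fin.ext_iff, oi_val hk he]
    simp
  simp [PP, this]

lemma PP_nonneg (n : ℕ) (j : Fin (4*n+1)) : 0 ≤ PP n j := by
  dsimp [PP]; split <;> positivity

lemma sum_interf_le (n k : ℕ) (hn : 0 < n) (hk : k < n) :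
    ∑ j ∈ Finset.univ.erase 0, PP n j / dist (cc n k) (ss n j)^2 ≤ 401 := by
  have hnr := hn1 hn
  have hsplit := Finset.sum_sdiff (f := fun j => PP n j / dist (cc n k) (ss n j)^2)
    (own_sub n k hk)
  have hterm : ∀ e, e < 4 → PP n (oi n k e) / dist (cc n k) (ss n (oi n k e))^2 = 100 := by
    intro e he
    rw [PP_oi n k hk he, ss_oi hk he, dist_cc_st_sq n k he]
    norm_num
  have hown : ∑ j ∈ own n k, PP n j / dist (cc n k) (ss n j)^2 = 400 := by
    rw [sum_own n k hk]
    rw [hterm 0 (by norm_num), hterm 1 (by norm_num), hterm 2 (by norm_num),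
      hterm 3 (by norm_num)]
    norm_num
  have hrest : ∀ j ∈ (Finset.univ.erase (0 : Fin (4*n+1))) \ own n k,
      PP n j / dist (cc n k) (ss n j)^2 ≤ 1/(1521*(n:ℝ)^2) := by
    intro j hj
    obtain ⟨hj1, hj2⟩ := Finset.mem_sdiff.mp hj
    have hjne : j ≠ 0 := (Finset.mem_erase.mp hj1).1
    have hj0 : j.val ≠ 0 := fun h => hjne (Fin.ext h)
    have hst : ss n j = st n ((j.val-1)/4) ((j.val-1)%4) := if_neg hj0
    have hk' : (j.val-1)/4 < n := by have := j.isLt; omega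
    have he' : (j.val-1)%4 < 4 := by omega
    have hkk : k ≠ (j.val-1)/4 := by
      intro h
      apply hj2
      have hje : j = oi n k ((j.val-1)%4) := by
        refine Fin.ext ?_
        rw [oi_val hk he']
        omega
      rw [hje]
      simp only [own, Finset.mem_insert, Finset.mem_singleton]
      have h4 := he'
      interval_cases h : (j.val-1)%4 <;> simp
    have hfar := cc_st_far hn hk hk' he' hkk
    have hd2 : (39*(n:ℝ))^2 ≤ dist (cc n k) (ss n j)^2 := by
      rw [hst]
      apply pow_le_pow_left₀ (by positivity)
      linarith
    have hPPj : PP n j = 1 := by simp [PP, hjne]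
    rw [hPPj]
    calc 1 / dist (cc n k) (ss n j)^2 ≤ 1/((39*(n:ℝ))^2) :=
          one_div_le_one_div_of_le (by positivity) hd2
      _ = 1/(1521*(n:ℝ)^2) := by ring_nf
  have hcard : (((Finset.univ.erase (0 : Fin (4*n+1))) \ own n k).card : ℝ) ≤ 4*n := by
    have h1 : ((Finset.univ.erase (0 : Fin (4*n+1))) \ own n k).card ≤ 4*n := by
      calc _ ≤ (Finset.univ.erase (0 : Fin (4*n+1))).card :=
            Finset.card_le_card Finset.sdiff_subset
        _ = 4*n := by
            rw [Finset.card_erase_of_mem (Finset.mem_univ _), Finset.card_univ,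
              Fintype.card_fin]
            omega
    exact_mod_cast h1
  have hsumrest : ∑ j ∈ (Finset.univ.erase (0 : Fin (4*n+1))) \ own n k,
      PP n j / dist (cc n k) (ss n j)^2 ≤ 1 := by
    calc ∑ j ∈ (Finset.univ.erase (0 : Fin (4*n+1))) \ own n k,
        PP n j / dist (cc n k) (ss n j)^2
        ≤ (((Finset.univ.erase (0 : Fin (4*n+1))) \ own n k).card : ℕ) • (1/(1521*(n:ℝ)^2)) :=
          Finset.sum_le_card_nsmul _ _ _ hrest
      _ = (((Finset.univ.erase (0 : Fin (4*n+1))) \ own n k).card : ℝ) * (1/(1521*(n:ℝ)^2)) := by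
          rw [nsmul_eq_mul]
      _ ≤ (4*(n:ℝ)) * (1/(1521*(n:ℝ)^2)) := by
          apply mul_le_mul_of_nonneg_right hcard (by positivity)
      _ ≤ 1 := by
          rw [mul_one_div, div_le_one (by positivity)]
          nlinarith
  linarith [hsplit, hown, hsumrest]

lemma center_mem (n k : ℕ) (hn : 0 < n) (hk : k < n) :
    cc n k ∈ recZone2 (ss n) (PP n) 1 1 0 := by
  have hnr := hn1 hn
  have hR := hR40 (n := n) hn
  have hRpos : 0 < Rv n := by linarith
  rw [recZone2]
  refine Set.mem_union_left _ ⟨?_, ?_⟩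
  · rintro ⟨j, hj⟩
    have hd0 : dist (cc n k) (ss n j) = 0 := by rw [hj, dist_self]
    rcases Nat.eq_zero_or_pos j.val with h0 | hp
    · have hss : ss n j = pt 0 0 := by simp [ss, h0]
      rw [hss, dist_cc_origin n k hn] at hd0
      linarith
    · have hst : ss n j = st n ((j.val-1)/4) ((j.val-1)%4) := if_neg (by omega)
      have hk' : (j.val-1)/4 < n := by have := j.isLt; omega
      have he' : (j.val-1)%4 < 4 := by omega
      rw [hst] at hd0
      by_cases hkk : k = (j.val-1)/4
      · rw [← hkk, dist_cc_st n k he'] at hd0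
        norm_num at hd0
      · have := cc_st_far hn hk hk' he' hkk
        linarith
  · show 1 ≤ sinr2 (ss n) (PP n) 1 0 (cc n k)
    unfold sinr2
    have hS := sum_interf_le n k hn hk
    have hS0 : 0 ≤ ∑ j ∈ Finset.univ.erase (0 : Fin (4*n+1)),
        PP n j / dist (cc n k) (ss n j)^2 :=
      Finset.sum_nonneg fun j _ => div_nonneg (PP_nonneg n j) (sq_nonneg _)
    rw [one_le_div (by linarith)]
    have hPP0 : PP n (0 : Fin (4*n+1)) = 402 * Rv n ^ 2 := if_pos rfl
    have hnum : PP n (0 : Fin (4*n+1)) / dist (cc n k) (ss n (0 : Fin (4*n+1)))^2 = 402 := by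
      rw [ss_zero n, dist_cc_origin n k hn, hPP0, mul_div_assoc,
        div_self (pow_ne_zero 2 (ne_of_gt hRpos)), mul_one]
    rw [hnum]
    linarith

lemma barrier (n k : ℕ) (hn : 0 < n) (hk : k < n) (p : E2)
    (hdd : |p 0 - cx n k| + |p 1 - cy n k| = 1/10) :
    p ∉ recZone2 (ss n) (PP n) 1 1 0 := by
  have hnr := hn1 hn
  have hR := hR40 (n := n) hn
  intro hp
  rw [recZone2, Set.mem_union, Set.mem_setOf_eq, Set.mem_singleton_iff] at hp
  rcases hp with ⟨hnrange, hsinr⟩ | hp0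
  · -- main case
    have hx0 : p 0 - cx n k ≠ 0 := by
      intro h0
      rw [h0, abs_zero, zero_add] at hdd
      apply hnrange
      rcases abs_cases (p 1 - cy n k) with ⟨h1, _⟩ | ⟨h1, _⟩
      · refine ⟨oi n k 2, ?_⟩
        rw [ss_oi hk (by norm_num)]
        refine PiLp.ext fun i => ?_
        fin_cases i
        · show cx n k + vx 2 / 10 = p 0
          norm_num [vx]
          linarith
        · show cy n k + vy 2 / 10 = p 1
          norm_num [vy]
          linarith [h1.symm.trans hdd]
      · refine ⟨oi n k 3, ?_⟩
        rw [ss_oi hk (by norm_num)]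
        refine PiLp.ext fun i => ?_
        fin_cases i
        · show cx n k + vx 3 / 10 = p 0
          norm_num [vx]
          linarith
        · show cy n k + vy 3 / 10 = p 1
          norm_num [vy]
          linarith [h1.symm.trans hdd]
    have hy0 : p 1 - cy n k ≠ 0 := by
      intro h0
      rw [h0, abs_zero, add_zero] at hdd
      apply hnrange
      rcases abs_cases (p 0 - cx n k) with ⟨h1, _⟩ | ⟨h1, _⟩
      · refine ⟨oi n k 0, ?_⟩
        rw [ss_oi hk (by norm_num)]
        refine PiLp.ext fun i => ?_
        fin_cases i
        · show cx n k + vx 0 / 10 = p 0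
          norm_num [vx]
          linarith [h1.symm.trans hdd]
        · show cy n k + vy 0 / 10 = p 1
          norm_num [vy]
          linarith
      · refine ⟨oi n k 1, ?_⟩
        rw [ss_oi hk (by norm_num)]
        refine PiLp.ext fun i => ?_
        fin_cases i
        · show cx n k + vx 1 / 10 = p 0
          norm_num [vx]
          linarith [h1.symm.trans hdd]
        · show cy n k + vy 1 / 10 = p 1
          norm_num [vy]
          linarith
    have hcore := core_bar (p 0 - cx n k) (p 1 - cy n k) hx0 hy0 hdd
    have t0 : PP n (oi n k 0) / dist p (ss n (oi n k 0))^2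
        = 1/(((p 0 - cx n k) - 1/10)^2 + (p 1 - cy n k)^2) := by
      rw [PP_oi n k hk (by norm_num), ss_oi hk (by norm_num), dist_sq]
      norm_num [st, pt0, pt1, vx, vy]
      ring_nf
    have t1 : PP n (oi n k 1) / dist p (ss n (oi n k 1))^2
        = 1/(((p 0 - cx n k) + 1/10)^2 + (p 1 - cy n k)^2) := by
      rw [PP_oi n k hk (by norm_num), ss_oi hk (by norm_num), dist_sq]
      norm_num [st, pt0, pt1, vx, vy]
      ring_nf
    have t2 : PP n (oi n k 2) / dist p (ss n (oi n k 2))^2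
        = 1/((p 0 - cx n k)^2 + ((p 1 - cy n k) - 1/10)^2) := by
      rw [PP_oi n k hk (by norm_num), ss_oi hk (by norm_num), dist_sq]
      norm_num [st, pt0, pt1, vx, vy]
      ring_nf
    have t3 : PP n (oi n k 3) / dist p (ss n (oi n k 3))^2
        = 1/((p 0 - cx n k)^2 + ((p 1 - cy n k) + 1/10)^2) := by
      rw [PP_oi n k hk (by norm_num), ss_oi hk (by norm_num), dist_sq]
      norm_num [st, pt0, pt1, vx, vy]
      ring_nf
    have hown : 440 ≤ ∑ j ∈ own n k, PP n j / dist p (ss n j)^2 := by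
      rw [sum_own n k hk, t0, t1, t2, t3]
      exact hcore
    have hsub : ∑ j ∈ own n k, PP n j / dist p (ss n j)^2
        ≤ ∑ j ∈ Finset.univ.erase (0 : Fin (4*n+1)), PP n j / dist p (ss n j)^2 :=
      Finset.sum_le_sum_of_subset_of_nonneg (own_sub n k hk)
        (fun j _ _ => div_nonneg (PP_nonneg n j) (sq_nonneg _))
    have hdp : Rv n - 1/10 ≤ dist p (pt 0 0) := by
      have h1 := dist_triangle (cc n k) p (pt 0 0)
      have h2 := dist_cc_origin n k hn
      have h3 := dist_le_l1 (cc n k) p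
      have h4 : |cx n k - p 0| = |p 0 - cx n k| := abs_sub_comm _ _
      have h5 : |cy n k - p 1| = |p 1 - cy n k| := abs_sub_comm _ _
      have h6 : (cc n k) 0 = cx n k := rfl
      have h7 : (cc n k) 1 = cy n k := rfl
      rw [h6, h7, h4, h5] at h3
      linarith
    have hdp2 : (Rv n - 1/10)^2 ≤ dist p (ss n (0 : Fin (4*n+1)))^2 := by
      rw [ss_zero n]
      exact pow_le_pow_left₀ (by linarith) hdp 2
    have hnum : PP n (0 : Fin (4*n+1)) / dist p (ss n (0 : Fin (4*n+1)))^2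
        ≤ 402 * Rv n^2 / (Rv n - 1/10)^2 := by
      have hPP0 : PP n (0 : Fin (4*n+1)) = 402 * Rv n ^2 := if_pos rfl
      rw [hPP0]
      exact div_le_div_of_nonneg_left (by positivity)
        (pow_pos (by linarith : (0:ℝ) < Rv n - 1/10) 2) hdp2
    unfold sinr2 at hsinr
    have hS0 : 0 ≤ ∑ j ∈ Finset.univ.erase (0 : Fin (4*n+1)), PP n j / dist p (ss n j)^2 :=
      Finset.sum_nonneg fun j _ => div_nonneg (PP_nonneg n j) (sq_nonneg _)
    rw [one_le_div (by linarith)] at hsinr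
    have hfin : 402 * Rv n^2 / (Rv n - 1/10)^2 < 441 := by
      rw [div_lt_iff₀ (pow_pos (by linarith : (0:ℝ) < Rv n - 1/10) 2)]
      nlinarith [mul_nonneg (by linarith : (0:ℝ) ≤ Rv n - 40) (by linarith : (0:ℝ) ≤ Rv n)]
    linarith
  · -- p = s₀ : impossible since the diamond is far from the origin
    rw [ss_zero n] at hp0
    have h0 : p 0 = 0 := by rw [hp0]; rfl
    have h1 : p 1 = 0 := by rw [hp0]; rfl
    rw [h0, h1] at hdd
    simp only [zero_sub, abs_neg] at hdd
    have hnc := norm_cc n k hn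
    nlinarith [sq_abs (cx n k), sq_abs (cy n k), abs_nonneg (cx n k), abs_nonneg (cy n k)]

theorem exists_network_with_linearly_many_cells' (n : ℕ) (hn : 0 < n) :
    ∃ (s : Fin (4 * n + 1) → EuclideanSpace ℝ (Fin 2)) (P : Fin (4 * n + 1) → ℝ),
      Function.Injective s ∧ (∀ j, 0 < P j) ∧ (∀ j, j ≠ 0 → P j = 1) ∧
      ∃ F : Fin n → Set (EuclideanSpace ℝ (Fin 2)),
        Function.Injective F ∧
        ∀ k, F k ∈ componentsOf (recZone2 s P 1 1 0) := by
  classical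
  have hnr := hn1 hn
  refine ⟨ss n, PP n, ss_inj n hn, ?_, ?_, ?_⟩
  · intro j
    dsimp [PP]
    split
    · nlinarith [hR40 (n := n) hn]
    · norm_num
  · intro j hj
    simp [PP, hj]
  · have hmem : ∀ k : Fin n, cc n k.val ∈ recZone2 (ss n) (PP n) 1 1 0 :=
      fun k => center_mem n k.val hn k.isLt
    have hcont : ∀ k : Fin n,
        Continuous (fun p : E2 => |p 0 - cx n k.val| + |p 1 - cy n k.val|) := by
      intro k
      have c0 : Continuous (fun p : E2 => p 0) := (EuclideanSpace.proj (0 : Fin 2)).continuous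
      have c1 : Continuous (fun p : E2 => p 1) := (EuclideanSpace.proj (1 : Fin 2)).continuous
      exact ((c0.sub continuous_const).abs).add ((c1.sub continuous_const).abs)
    have hsub : ∀ k : Fin n,
        connectedComponentIn (recZone2 (ss n) (PP n) 1 1 0) (cc n k.val) ⊆
        {p : E2 | |p 0 - cx n k.val| + |p 1 - cy n k.val| < 1/10} := by
      intro k
      have hUopen : IsOpen {p : E2 | |p 0 - cx n k.val| + |p 1 - cy n k.val| < 1/10} :=
        isOpen_lt (hcont k) continuous_const
      have hVopen : IsOpen {p : E2 | 1/10 < |p 0 - cx n k.val| + |p 1 - cy n k.val|} :=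
        isOpen_lt continuous_const (hcont k)
      have hTZ := connectedComponentIn_subset (recZone2 (ss n) (PP n) 1 1 0) (cc n k.val)
      have hTUV : connectedComponentIn (recZone2 (ss n) (PP n) 1 1 0) (cc n k.val) ⊆
          {p : E2 | |p 0 - cx n k.val| + |p 1 - cy n k.val| < 1/10} ∪
          {p : E2 | 1/10 < |p 0 - cx n k.val| + |p 1 - cy n k.val|} := by
        intro p hp
        have hpZ := hTZ hp
        have hne : |p 0 - cx n k.val| + |p 1 - cy n k.val| ≠ 1/10 :=
          fun h => barrier n k.val hn k.isLt p h hpZ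
        rcases lt_or_gt_of_ne hne with h | h
        · exact Or.inl h
        · exact Or.inr h
      have hccU : cc n k.val ∈ {p : E2 | |p 0 - cx n k.val| + |p 1 - cy n k.val| < 1/10} := by
        have e0 : (cc n k.val) 0 = cx n k.val := rfl
        have e1 : (cc n k.val) 1 = cy n k.val := rfl
        show |(cc n k.val) 0 - cx n k.val| + |(cc n k.val) 1 - cy n k.val| < 1/10
        rw [e0, e1]
        norm_num
      have hVempty : ¬(connectedComponentIn (recZone2 (ss n) (PP n) 1 1 0) (cc n k.val) ∩
          {p : E2 | 1/10 < |p 0 - cx n k.val| + |p 1 - cy n k.val|}).Nonempty := by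
        intro hV
        obtain ⟨q, _, hqU, hqV⟩ := isPreconnected_connectedComponentIn _ _ hUopen hVopen hTUV
          ⟨cc n k.val, mem_connectedComponentIn (hmem k), hccU⟩ hV
        have hu : |q 0 - cx n k.val| + |q 1 - cy n k.val| < 1/10 := hqU
        have hv : 1/10 < |q 0 - cx n k.val| + |q 1 - cy n k.val| := hqV
        linarith
      intro p hp
      rcases hTUV hp with h | h
      · exact h
      · exact absurd ⟨p, hp, h⟩ hVempty
    refine ⟨fun k => connectedComponentIn (recZone2 (ss n) (PP n) 1 1 0) (cc n k.val),
      ?_, fun k => ⟨cc n k.val, hmem k, rfl⟩⟩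
    intro k k' hkk
    by_contra hne
    have hvne : (k : ℕ) ≠ (k' : ℕ) := fun h => hne (Fin.ext h)
    have h1 : cc n k'.val ∈ connectedComponentIn (recZone2 (ss n) (PP n) 1 1 0) (cc n k'.val) :=
      mem_connectedComponentIn (hmem k')
    have hkk' : connectedComponentIn (recZone2 (ss n) (PP n) 1 1 0) (cc n k.val) =
        connectedComponentIn (recZone2 (ss n) (PP n) 1 1 0) (cc n k'.val) := hkk
    rw [← hkk'] at h1
    have h2 := hsub k h1
    have h3 := dist_cc_cc hn k.isLt k'.isLt hvne
    have h4 := dist_le_l1 (cc n k'.val) (cc n k.val)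
    have e0 : (cc n k'.val) 0 = cx n k'.val := rfl
    have e1 : (cc n k'.val) 1 = cy n k'.val := rfl
    have e0' : (cc n k.val) 0 = cx n k.val := rfl
    have e1' : (cc n k.val) 1 = cy n k.val := rfl
    rw [e0, e1, e0', e1'] at h4
    have h5 : dist (cc n k.val) (cc n k'.val) = dist (cc n k'.val) (cc n k.val) := dist_comm _ _
    have h2' : |cx n k'.val - cx n k.val| + |cy n k'.val - cy n k.val| < 1/10 := h2
    linarith

end WCnet


theorem exists_network_with_linearly_many_cells (n : ℕ) (hn : 0 < n) :
    ∃ (s : Fin (4 * n + 1) → EuclideanSpace ℝ (Fin 2)) (P : Fin (4 * n + 1) → ℝ),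
      Function.Injective s ∧ (∀ j, 0 < P j) ∧ (∀ j, j ≠ 0 → P j = 1) ∧
      ∃ F : Fin n → Set (EuclideanSpace ℝ (Fin 2)),
        Function.Injective F ∧
        ∀ k, F k ∈ componentsOf (recZone2 s P 1 1 0) := by
  exact WCnet.exists_network_with_linearly_many_cells' n hn
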